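/- For every real number w, the vector of electrical angles (Φ_1, Φ_2, Φ_3, Φ_4) = (−π, −π/3, π/3, w) is an ambiguous vector for the linear array r = (0,1,3,4): the 4×4 steering matrix A with entries A_{m,l} = exp(𝕚·r_m·Φ_l), r = (0,1,3,4), has determinant 0. In fact, already the three steering vectors (exp(𝕚·r_m·Φ_l))_{m=1,...,4} for l = 1,2,3 are linearly dependent, i.e., the 4×3 matrix they form has rank less than 3. -/

import Mathlib

/-!
For the array `r = (0, 1, 3, 4)` the steering vector of `Φ` is `(1, x, x³, x⁴)` with `x = e^{iΦ}`.
The angles `-π, -π/3, π/3` all give cube roots `x` of `-1`, so their steering vectors are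
`(1, x, -1, -x)`: they lie in a plane, hence the `4 × 3` matrix has rank at most `2`, and any
`4 × 4` steering matrix containing these three columns is singular.
-/

open Real Complex

noncomputable def steeringMatrix {M L : ℕ} (r : Fin M → ℝ) (Φ : Fin L → ℝ) :
    Matrix (Fin M) (Fin L) ℂ :=
  Matrix.of fun m l => exp (I * (r m : ℂ) * (Φ l : ℂ))

namespace Matrix

variable {K : Type*} [Field K]

theorem exists_mulVec_eq_zero_of_rank_lt {m n : Type*} [Fintype m] [Fintype n]
    (A : Matrix m n K) (h : A.rank < Fintype.card n) : ∃ v ≠ 0, A *ᵥ v = 0 := by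
  have hker := LinearMap.finrank_range_add_finrank_ker A.mulVecLin
  rw [Module.finrank_fintype_fun_eq_card] at hker
  have hpos : 1 ≤ Module.finrank K (LinearMap.ker A.mulVecLin) := by
    rw [rank] at h
    omega
  obtain ⟨v, hAv, hv⟩ :=
    Submodule.exists_mem_ne_zero_of_ne_bot (Submodule.one_le_finrank_iff.mp hpos)
  exact ⟨v, hv, hAv⟩

theorem det_eq_zero_of_rank_submatrix_castSucc_lt {n : ℕ}
    (A : Matrix (Fin (n + 1)) (Fin (n + 1)) K) (h : (A.submatrix id Fin.castSucc).rank < n) :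
    A.det = 0 := by
  obtain ⟨v, hv, hAv⟩ := exists_mulVec_eq_zero_of_rank_lt _ (by rwa [Fintype.card_fin])
  refine exists_mulVec_eq_zero_iff.mp ⟨Fin.snoc v 0, fun h0 => hv ?_, ?_⟩
  · funext i
    simpa using congrFun h0 i.castSucc
  · ext i
    simpa [mulVec, dotProduct, Fin.sum_univ_castSucc] using congrFun hAv i

end Matrix

theorem exp_I_mul_odd_mul_pi_div_three_pow_three (k : ℤ) :
    exp (I * ((2 * k + 1) * π / 3)) ^ 3 = -1 := by
  rw [← Complex.exp_nat_mul, show ((3 : ℕ) : ℂ) * (I * ((2 * k + 1) * π / 3)) =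
      π * I + k * (2 * π * I) by push_cast; ring,
    Complex.exp_add, exp_pi_mul_I, exp_int_mul_two_pi_mul_I, mul_one]

theorem steeringMatrix_natCast {M L : ℕ} (p : Fin M → ℕ) (Φ : Fin L → ℝ) :
    steeringMatrix (fun m => (p m : ℝ)) Φ = Matrix.of fun m l => exp (I * Φ l) ^ p m := by
  ext m l
  rw [steeringMatrix, Matrix.of_apply, Matrix.of_apply, ← Complex.exp_nat_mul]
  push_cast
  ring_nf

theorem steeringMatrix_0134_eq_mul {L : ℕ} {Φ : Fin L → ℝ} (hΦ : ∀ l, exp (I * Φ l) ^ 3 = -1) :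
    steeringMatrix ![0, 1, 3, 4] Φ =
      (!![1, 0; 0, 1; -1, 0; 0, -1] : Matrix (Fin 4) (Fin 2) ℂ) * steeringMatrix ![0, 1] Φ := by
  have h0134 : (![0, 1, 3, 4] : Fin 4 → ℝ) = fun m => ((![0, 1, 3, 4] : Fin 4 → ℕ) m : ℝ) := by
    ext m; fin_cases m <;> simp
  have h01 : (![0, 1] : Fin 2 → ℝ) = fun m => ((![0, 1] : Fin 2 → ℕ) m : ℝ) := by
    ext m; fin_cases m <;> simp
  rw [h0134, h01, steeringMatrix_natCast, steeringMatrix_natCast]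
  ext m l
  have h4 : exp (I * Φ l) ^ 4 = - exp (I * Φ l) := by rw [pow_succ, hΦ, neg_one_mul]
  fin_cases m <;> simp [Matrix.mul_apply, Fin.sum_univ_two, hΦ, h4]

theorem rank_steeringMatrix_0134_le_two {L : ℕ} {Φ : Fin L → ℝ}
    (hΦ : ∀ l, exp (I * Φ l) ^ 3 = -1) : (steeringMatrix ![0, 1, 3, 4] Φ).rank ≤ 2 := by
  rw [steeringMatrix_0134_eq_mul hΦ]
  exact (Matrix.rank_mul_le_left _ _).trans (Matrix.rank_le_width _)

/-- For every real `w` the vector of electrical angles `(-π, -π/3, π/3, w)` is an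
ambiguous vector for the linear array `r = (0,1,3,4)`: the steering matrix has
determinant `0`; in fact already the first three steering vectors are linearly
dependent, i.e. the `4×3` matrix they form has rank less than `3`. -/
theorem ambiguity_0134_class_three (w : ℝ) :
    Matrix.det (Matrix.of fun m l : Fin 4 =>
      Complex.exp (Complex.I * ((![0, 1, 3, 4] m : ℝ) : ℂ) *
        (((![-π, -π / 3, π / 3, w] : Fin 4 → ℝ) l : ℝ) : ℂ))) = 0 ∧
    (Matrix.of fun (m : Fin 4) (l : Fin 3) =>
      Complex.exp (Complex.I * ((![0, 1, 3, 4] m : ℝ) : ℂ) *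
        (((![-π, -π / 3, π / 3] : Fin 3 → ℝ) l : ℝ) : ℂ))).rank < 3 := by
  have hcube : ∀ l, exp (I * (![-π, -π / 3, π / 3] l : ℝ)) ^ 3 = -1 := by
    intro l
    obtain ⟨k, hk⟩ : ∃ k : ℤ, (![-π, -π / 3, π / 3] l : ℂ) = (2 * k + 1) * π / 3 := by
      fin_cases l
      exacts [⟨-2, by push_cast; ring⟩, ⟨-1, by push_cast; ring⟩, ⟨0, by push_cast; ring⟩]
    rw [hk]
    exact exp_I_mul_odd_mul_pi_div_three_pow_three k
  have hrank : (steeringMatrix ![0, 1, 3, 4] ![-π, -π / 3, π / 3]).rank < 3 :=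
    (rank_steeringMatrix_0134_le_two hcube).trans_lt (by norm_num)
  have hcols : (steeringMatrix ![0, 1, 3, 4] ![-π, -π / 3, π / 3, w]).submatrix id Fin.castSucc =
      steeringMatrix ![0, 1, 3, 4] ![-π, -π / 3, π / 3] := by
    ext m l
    fin_cases l <;> rfl
  exact ⟨Matrix.det_eq_zero_of_rank_submatrix_castSucc_lt _ (hcols ▸ hrank), hrank⟩
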